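/- The reachable subgraph of a closed graph is closed: if γ is closed, then for every node x, the restriction of γ to reach γ x is closed. -/

import Mathlib

open scoped Classical

/-- A partial graph of type `T`: a finite partial map from nodes (natural
numbers, undefined on `0 = null`) to pairs of a value and an adjacency list. -/
structure PGraph (T : Type) where
  f : ℕ → Option (T × List ℕ)
  dom : Finset ℕ
  mem_dom : ∀ x, x ∈ dom ↔ (f x).isSome
  null_not_mem : f 0 = none

namespace PGraph

variable {T T' : Type}

def empty : PGraph T :=
  ⟨fun _ => none, ∅, by intro x; simp, rfl⟩

/-- Total (left-biased) union; meaningful when domains are disjoint. -/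
def union (γ₁ γ₂ : PGraph T) : PGraph T where
  f := fun x => match γ₁.f x with
    | some v => some v
    | none => γ₂.f x
  dom := γ₁.dom ∪ γ₂.dom
  mem_dom := by
    intro x
    rw [Finset.mem_union, γ₁.mem_dom, γ₂.mem_dom]
    cases h : γ₁.f x <;> simp [h]
  null_not_mem := by simp [γ₁.null_not_mem, γ₂.null_not_mem]

/-- The partial PCM join: defined iff the domains are disjoint. -/
noncomputable def join (γ₁ γ₂ : PGraph T) : Option (PGraph T) :=
  if Disjoint γ₁.dom γ₂.dom then some (union γ₁ γ₂) else none

/-- Filter (restriction) of a graph to a set of nodes. -/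
noncomputable def restrict (γ : PGraph T) (S : Set ℕ) : PGraph T where
  f := fun x => if x ∈ S then γ.f x else none
  dom := γ.dom.filter (fun x => x ∈ S)
  mem_dom := by
    intro x
    rw [Finset.mem_filter, γ.mem_dom]
    by_cases h : x ∈ S <;> simp [h]
  null_not_mem := by simp [γ.null_not_mem]

/-- Map combinator: apply `g` pointwise at each node. -/
def mapNode (g : ℕ → T × List ℕ → T' × List ℕ) (γ : PGraph T) : PGraph T' where
  f := fun x => (γ.f x).map (g x)
  dom := γ.dom
  mem_dom := by intro x; rw [γ.mem_dom]; cases h : γ.f x <;> simp [h]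
  null_not_mem := by simp [γ.null_not_mem]

/-- Erasure: replace every value with the unit value, keeping adjacency. -/
def erasure (γ : PGraph T) : PGraph Unit :=
  mapNode (fun _ p => ((), p.2)) γ

/-- Adjacency list of a node. -/
def adj (γ : PGraph T) (x : ℕ) : List ℕ :=
  ((γ.f x).map Prod.snd).getD []

/-- The value stored at a node, if any. -/
def val? (γ : PGraph T) (x : ℕ) : Option T :=
  (γ.f x).map Prod.fst

/-- Sinks: nodes appearing in some adjacency list. -/
def sinks (γ : PGraph T) : Set ℕ :=
  ⋃ x ∈ γ.dom, {y | y ∈ γ.adj x}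

/-- A graph is closed if it has no dangling edges. -/
def Closed (γ : PGraph T) : Prop :=
  sinks γ ⊆ insert 0 (↑γ.dom : Set ℕ)

/-- Remove a node (and its outgoing edges) from the graph. -/
def erase (γ : PGraph T) (y : ℕ) : PGraph T where
  f := fun x => if x = y then none else γ.f x
  dom := γ.dom.erase y
  mem_dom := by
    intro x
    rw [Finset.mem_erase, γ.mem_dom]
    by_cases h : x = y <;> simp [h]
  null_not_mem := by
    by_cases h : (0 : ℕ) = y <;> simp [h, γ.null_not_mem]

/-- Set of nodes reachable from `x` in `γ`. -/
def reach (γ : PGraph T) (x : ℕ) : Set ℕ :=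
  if h : x ∈ γ.dom then
    {x} ∪ ⋃ y ∈ γ.adj x, reach (γ.erase x) y
  else ∅
termination_by γ.dom.card
decreasing_by simpa [PGraph.erase] using Finset.card_erase_lt_of_mem h

/-- Summits of a path starting at `x`. -/
def summit (γ : PGraph T) (x : ℕ) : Set ℕ :=
  if h : x ∈ γ.dom then ⋃ y ∈ γ.adj x, summit (γ.erase x) y
  else {x}
termination_by γ.dom.card
decreasing_by simpa [PGraph.erase] using Finset.card_erase_lt_of_mem h

/-- All summits of a graph. -/
def summits (γ : PGraph T) : Set ℕ :=
  ⋃ x ∈ γ.dom, summit γ x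

/-- Nodes that lie on a cycle (reachable from one of their own children). -/
def cycles (γ : PGraph T) : Set ℕ :=
  {x | x ∈ ⋃ y ∈ γ.adj x, reach γ y}

/-- Targets of dangling edges. -/
def dangls (γ : PGraph T) : Set ℕ :=
  sinks γ \ ↑γ.dom

/-- Nodes forming cycles of size one. -/
def loops (γ : PGraph T) : Set ℕ :=
  {x | x ∈ γ.dom ∧ x ∈ γ.adj x}

/-- Filter by contents: keep nodes whose value lies in `V`. -/
noncomputable def filterVal (γ : PGraph T) (V : Set T) : PGraph T :=
  γ.restrict {x | ∃ v ∈ V, γ.val? x = some v}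

/-- Update the entry at node `x` (if present). -/
def update (γ : PGraph T) (x : ℕ) (p : T × List ℕ) : PGraph T where
  f := fun y => if y = x then (γ.f y).map (fun _ => p) else γ.f y
  dom := γ.dom
  mem_dom := by
    intro y
    rw [γ.mem_dom]
    by_cases h : y = x
    · subst h; cases hf : γ.f y <;> simp [hf]
    · simp [h]
  null_not_mem := by
    by_cases h : (0 : ℕ) = x
    · subst h; simp [γ.null_not_mem]
    · simp [h, γ.null_not_mem]

/-- Binary graphs: every adjacency list has exactly two elements. -/
def Binary (γ : PGraph T) : Prop :=
  ∀ x p, γ.f x = some p → p.2.length = 2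

/-- Marks of the Schorr-Waite algorithm. -/
inductive Mark | O | L | R | X
deriving DecidableEq

/-- The `if-mark` transformation on a node's mark and children. -/
def ifMark (f : ℕ → ℕ) (x : ℕ) : Mark × List ℕ → Unit × List ℕ
  | (Mark.L, [_, r]) => ((), [f x, r])
  | (Mark.R, [l, _]) => ((), [l, f x])
  | (_, l) => ((), l)

end PGraph

namespace PGraph

variable {T : Type}

theorem mem_dom_erase {γ : PGraph T} {x z : ℕ} : z ∈ (γ.erase x).dom ↔ z ≠ x ∧ z ∈ γ.dom :=
  Finset.mem_erase

theorem adj_erase_of_ne {γ : PGraph T} {x y : ℕ} (h : y ≠ x) : (γ.erase x).adj y = γ.adj y := by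
  simp [erase, adj, h]

theorem reach_of_mem_dom {γ : PGraph T} {x : ℕ} (h : x ∈ γ.dom) :
    γ.reach x = {x} ∪ ⋃ y ∈ γ.adj x, (γ.erase x).reach y := by
  rw [reach, dif_pos h]

theorem reach_of_not_mem_dom {γ : PGraph T} {x : ℕ} (h : x ∉ γ.dom) : γ.reach x = ∅ := by
  rw [reach, dif_neg h]

theorem mem_reach_self {γ : PGraph T} {x : ℕ} (h : x ∈ γ.dom) : x ∈ γ.reach x := by
  rw [reach_of_mem_dom h]
  exact Or.inl rfl

theorem reach_subset_dom (γ : PGraph T) (x : ℕ) : γ.reach x ⊆ γ.dom := by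
  by_cases hx : x ∈ γ.dom
  · rw [reach_of_mem_dom hx]
    rintro z (rfl | hz)
    · exact hx
    · obtain ⟨y, -, hz⟩ := Set.mem_iUnion₂.mp hz
      exact (mem_dom_erase.mp ((γ.erase x).reach_subset_dom y hz)).2
  · simp [reach_of_not_mem_dom hx]
termination_by γ.dom.card
decreasing_by simpa [erase] using Finset.card_erase_lt_of_mem hx

theorem mem_reach_of_mem_adj {γ : PGraph T} {x y z : ℕ} (hy : y ∈ γ.reach x)
    (hz : z ∈ γ.adj y) (hzd : z ∈ γ.dom) : z ∈ γ.reach x := by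
  have hx : x ∈ γ.dom := by
    by_contra hx
    simp [reach_of_not_mem_dom hx] at hy
  rw [reach_of_mem_dom hx] at hy ⊢
  by_cases hzx : z = x
  · exact Or.inl hzx
  have hzd' : z ∈ (γ.erase x).dom := mem_dom_erase.mpr ⟨hzx, hzd⟩
  refine Or.inr (Set.mem_iUnion₂.mpr ?_)
  rcases hy with rfl | hy
  · exact ⟨z, hz, mem_reach_self hzd'⟩
  · obtain ⟨w, hw, hyw⟩ := Set.mem_iUnion₂.mp hy
    have hyx : y ≠ x := (mem_dom_erase.mp ((γ.erase x).reach_subset_dom w hyw)).1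
    rw [← adj_erase_of_ne hyx] at hz
    exact ⟨w, hw, mem_reach_of_mem_adj hyw hz hzd'⟩
termination_by γ.dom.card
decreasing_by simpa [erase] using Finset.card_erase_lt_of_mem hx

theorem mem_sinks_restrict {γ : PGraph T} {S : Set ℕ} {z : ℕ} :
    z ∈ (γ.restrict S).sinks ↔ ∃ y ∈ γ.dom, y ∈ S ∧ z ∈ γ.adj y := by
  simp only [sinks, restrict, adj, Set.mem_iUnion, Finset.mem_filter, Set.mem_ofPred_eq,
    exists_prop, and_assoc]
  refine exists_congr fun y => and_congr_right fun _ => and_congr_right fun hyS => ?_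
  simp [hyS]

theorem Closed.restrict {γ : PGraph T} (hc : γ.Closed) {S : Set ℕ}
    (hS : ∀ y ∈ S, ∀ z ∈ γ.adj y, z ∈ γ.dom → z ∈ S) : (γ.restrict S).Closed := by
  intro z hz
  obtain ⟨y, hyd, hyS, hzy⟩ := mem_sinks_restrict.mp hz
  rcases hc (Set.mem_iUnion₂.mpr ⟨y, hyd, hzy⟩) with rfl | hzd
  · exact Or.inl rfl
  · exact Or.inr (Finset.mem_filter.mpr ⟨hzd, hS y hyS z hzy hzd⟩)

end PGraph

/-- The reachable subgraph of a closed graph is closed. -/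
theorem closed_restrict_reach (T : Type) (γ : PGraph T) (x : ℕ)
    (hc : γ.Closed) :
    (γ.restrict (γ.reach x)).Closed :=
  hc.restrict fun _ hy _ hz hzd => PGraph.mem_reach_of_mem_adj hy hz hzd
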